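/- arXiv:hep-th/9807214 — 5 statements merged into one kernel-verified Lean document; each statement's English description precedes it below -/
import Mathlib

section
/- (Chevalley theorem for distinguished Clifford algebras, two-factor form.) Let R be a commutative ring in which 2 is invertible, let M₁ and M₂ be R-modules with quadratic forms Q₁ and Q₂, and let Q₁.prod Q₂ be the quadratic form on M₁ × M₂ given by (m₁, m₂) ↦ Q₁ m₁ + Q₂ m₂. Then there is an R-algebra isomorphism between CliffordAlgebra (Q₁.prod Q₂) and the graded (super) tensor product of CliffordAlgebra Q₁ and CliffordAlgebra Q₂ taken with respect to their ℤ/2 even–odd gradings, under which ι (m₁, m₂) corresponds to ι m₁ ⊗ 1 + 1 ⊗ ι m₂. -/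
open CliffordAlgebra
open scoped TensorProduct

/-- Chevalley theorem (two-factor form): the Clifford algebra of the orthogonal direct sum
`Q₁.prod Q₂` is isomorphic as an `R`-algebra to the graded (super) tensor product of the
Clifford algebras of `Q₁` and `Q₂` with respect to their even–odd `ℤ/2`-gradings, with
`ι (m₁, m₂)` corresponding to `ι m₁ ⊗ 1 + 1 ⊗ ι m₂`. -/
theorem chevalley_clifford_prod
    {R : Type*} [CommRing R] [Invertible (2 : R)]
    {M₁ M₂ : Type*} [AddCommGroup M₁] [AddCommGroup M₂] [Module R M₁] [Module R M₂]
    (Q₁ : QuadraticForm R M₁) (Q₂ : QuadraticForm R M₂) :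
    ∃ e : CliffordAlgebra (Q₁.prod Q₂) ≃ₐ[R] (evenOdd Q₁ ᵍ⊗[R] evenOdd Q₂),
      ∀ (m₁ : M₁) (m₂ : M₂),
        e (ι (Q₁.prod Q₂) (m₁, m₂)) =
          GradedTensorProduct.tmul R (ι Q₁ m₁) (1 : CliffordAlgebra Q₂)
            + GradedTensorProduct.tmul R (1 : CliffordAlgebra Q₁) (ι Q₂ m₂) := by
  exact ⟨prodEquiv Q₁ Q₂, fun m₁ m₂ => ofProd_ι_mk Q₁ Q₂ m₁ m₂⟩
end

section
/- Let k be a field of characteristic different from 2, V a finite-dimensional k-vector space of dimension n, and Q a quadratic form on V. Then the Clifford algebra CliffordAlgebra Q is finite-dimensional over k of dimension 2^n. -/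
/-!
When `2` is invertible, the Chevalley map `CliffordAlgebra.equivExterior` identifies the Clifford
algebra of any quadratic form with the exterior algebra as a module (not as an algebra). A basis
`e₁, …, eₙ` of `V` gives the exterior algebra the basis of ordered products `e_{i₁} ∧ ⋯ ∧ e_{iₖ}`,
one for each subset `{i₁ < ⋯ < iₖ}` of `{1, …, n}`, hence `2 ^ n` elements.
-/

open Module

theorem ExteriorAlgebra.finrank_eq_two_pow {R M : Type*} [CommRing R] [StrongRankCondition R]
    [AddCommGroup M] [Module R M] [Module.Free R M] [Module.Finite R M] :
    finrank R (ExteriorAlgebra R M) = 2 ^ finrank R M := by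
  rw [finrank_eq_card_basis (finBasis R M).ExteriorAlgebra, Fintype.card_finset,
    Fintype.card_fin]

instance ExteriorAlgebra.instModuleFinite {R M : Type*} [CommRing R] [AddCommGroup M]
    [Module R M] [Module.Free R M] [Module.Finite R M] :
    Module.Finite R (ExteriorAlgebra R M) :=
  .of_basis ((Free.chooseBasis R M).reindex (Fintype.equivFin _)).ExteriorAlgebra

/-- Over a field of characteristic different from two, the Clifford algebra of a quadratic
form on an `n`-dimensional vector space is finite dimensional of dimension `2 ^ n`. -/
theorem clifford_finrank
    {k : Type*} [Field k] (h2 : (2 : k) ≠ 0)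
    {V : Type*} [AddCommGroup V] [Module k V] [FiniteDimensional k V]
    (n : ℕ) (hn : Module.finrank k V = n) (Q : QuadraticForm k V) :
    FiniteDimensional k (CliffordAlgebra Q) ∧
      Module.finrank k (CliffordAlgebra Q) = 2 ^ n := by
  let : Invertible (2 : k) := invertibleOfNonzero h2
  let e : CliffordAlgebra Q ≃ₗ[k] ExteriorAlgebra k V := CliffordAlgebra.equivExterior Q
  exact ⟨.equiv e.symm, by rw [e.finrank_eq, ExteriorAlgebra.finrank_eq_two_pow, hn]⟩
end

section
/- C^{p+n,q+n} ≅ M_{2^n}(C^{p,q}): for all natural numbers p, q, n, the real Clifford algebra of the quadratic form Q_{p+n,q+n} on Fin (p+n+q+n) → ℝ is isomorphic as an ℝ-algebra to the algebra of 2^n × 2^n matrices with entries in the real Clifford algebra of Q_{p,q}. -/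
/-
Over any commutative ring, let `H(s, t) = s t` be the hyperbolic plane. Then
`C(Q ⊥ H) ≅ M₂(C(Q))`: the map `ι(m, s, t) ↦ [[ι m, s], [t, -ι m]]` squares to `Q m + s t`, so it
extends to an algebra map. For the isotropic generators `e, f` of `H` (`e² = f² = 0`,
`ef + fe = 1`) the elements `ef, e, f, fe` are `2 × 2` matrix units, and they commute with the
copy `ι m ↦ ι(m, 0) (ef - fe)` of `C(Q)`; together these give the inverse map.
Over `ℝ`, `-x² + y² = (y - x)(y + x)` shows `Q_{p+1,q+1} ≅ Q_{p,q} ⊥ H`, so by induction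
`C^{p+n+1,q+n+1} ≅ M₂(C^{p+n,q+n}) ≅ M₂(M_{2ⁿ}(C^{p,q})) = M_{2ⁿ⁺¹}(C^{p,q})`.
-/

/-- The quadratic form `Q_{p,q}` on `Fin (p + q) → ℝ`, given by
`Q_{p,q}(x) = -(x₀² + ⋯ + x_{p-1}²) + (x_p² + ⋯ + x_{p+q-1}²)`. -/
noncomputable def Qpq (p q : ℕ) : QuadraticForm ℝ (Fin (p + q) → ℝ) :=
  QuadraticMap.weightedSumSquares ℝ (fun i : Fin (p + q) => if (i : ℕ) < p then (-1 : ℝ) else 1)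

namespace Matrix

variable {R B A n : Type*} [CommSemiring R] [Semiring A] [Algebra R A] [Semiring B] [Algebra R B]
  [Fintype n] [DecidableEq n]

def liftOfMatrixUnits (f : B →ₐ[R] A) (u : n → n → A)
    (hmul : ∀ i j k l, u i j * u k l = if j = k then u i l else 0)
    (hone : ∑ i, u i i = 1) (hcomm : ∀ b i j, Commute (f b) (u i j)) :
    Matrix n n B →ₐ[R] A :=
  AlgHom.ofLinearMap
    (∑ i, ∑ j, (LinearMap.mulRight R (u i j)).comp (f.toLinearMap.comp (entryLinearMap R B i j)))
    (by simp [one_apply, hone])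
    (fun M N => by
      simp only [LinearMap.sum_apply, LinearMap.comp_apply, entryLinearMap_apply,
        AlgHom.toLinearMap_apply, LinearMap.mulRight_apply, mul_apply, map_sum, map_mul,
        Finset.sum_mul]
      simp only [Finset.mul_sum]
      have hsummand : ∀ i j k l, f (M i j) * u i j * (f (N k l) * u k l)
          = if j = k then f (M i j) * f (N k l) * u i l else 0 := fun i j k l => by
        rw [mul_assoc, ← mul_assoc (u i j), ← (hcomm _ i j).eq, mul_assoc, hmul]
        split_ifs <;> simp [mul_assoc]
      simp only [hsummand, Finset.sum_ite_irrel, Finset.sum_const_zero, Finset.sum_ite_eq,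
        Finset.mem_univ, if_true]
      exact Finset.sum_congr rfl fun i _ => Finset.sum_comm)

lemma liftOfMatrixUnits_apply (f : B →ₐ[R] A) (u : n → n → A) (hmul hone hcomm)
    (M : Matrix n n B) :
    liftOfMatrixUnits f u hmul hone hcomm M = ∑ i, ∑ j, f (M i j) * u i j := by
  simp [liftOfMatrixUnits]

variable (R) in
def finTwoPowSuccAlgEquiv (k : ℕ) :
    Matrix (Fin 2) (Fin 2) (Matrix (Fin (2 ^ k)) (Fin (2 ^ k)) A) ≃ₐ[R]
      Matrix (Fin (2 ^ (k + 1))) (Fin (2 ^ (k + 1))) A :=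
  (compAlgEquiv _ _ _ _).trans <|
    reindexAlgEquiv R _ (finProdFinEquiv.trans (finCongr (pow_succ' 2 k).symm))

end Matrix

open CliffordAlgebra QuadraticMap

namespace QuadraticForm

variable {R : Type*} [CommRing R]

variable (R) in
def hyperbolicPlane : QuadraticForm R (R × R) :=
  linMulLin (LinearMap.fst R R R) (LinearMap.snd R R R)

@[simp] lemma hyperbolicPlane_apply (x : R × R) : hyperbolicPlane R x = x.1 * x.2 := rfl

variable {ι κ : Type*} [Fintype ι] [Fintype κ]

def weightedSumSquaresCompEquiv (w : κ → R) (σ : ι ≃ κ) :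
    (weightedSumSquares R (w ∘ σ)).IsometryEquiv (weightedSumSquares R w) where
  toLinearEquiv := LinearEquiv.funCongrLeft R R σ.symm
  map_app' v := by
    simp only [weightedSumSquares_apply]
    exact Fintype.sum_equiv σ.symm _ _ fun k => by simp

def weightedSumSquaresSumElimEquivProd (w₁ : ι → R) (w₂ : κ → R) :
    (weightedSumSquares R (Sum.elim w₁ w₂)).IsometryEquiv
      ((weightedSumSquares R w₁).prod (weightedSumSquares R w₂)) where
  toLinearEquiv := LinearEquiv.sumArrowLequivProdArrow ι κ R R
  map_app' v := by simp [weightedSumSquares_apply, Fintype.sum_sum_type]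

def weightedSumSquaresNegOneOneEquivHyperbolic [Invertible (2 : R)] :
    (weightedSumSquares R (![-1, 1] : Fin 2 → R)).IsometryEquiv (hyperbolicPlane R) where
  toFun v := (v 1 - v 0, v 1 + v 0)
  invFun x := ![⅟2 * (x.2 - x.1), ⅟2 * (x.1 + x.2)]
  map_add' v w := by ext <;> simp only [Pi.add_apply, Prod.fst_add, Prod.snd_add] <;> ring
  map_smul' c v := by
    ext <;> simp only [Pi.smul_apply, smul_eq_mul, RingHom.id_apply, Prod.smul_fst, Prod.smul_snd] <;> ring
  left_inv v := by
    ext i; fin_cases i <;>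
      simp only [Matrix.cons_val_zero, Matrix.cons_val_one, Matrix.cons_val_fin_one,
        add_sub_sub_cancel, sub_add_add_cancel, Fin.zero_eta, Fin.mk_one]
    · linear_combination v 0 * invOf_mul_self (2 : R)
    · linear_combination v 1 * invOf_mul_self (2 : R)
  right_inv x := by
    ext <;> simp only [Matrix.cons_val_zero, Matrix.cons_val_one, Matrix.cons_val_fin_one]
    · linear_combination x.1 * invOf_mul_self (2 : R)
    · linear_combination x.2 * invOf_mul_self (2 : R)
  map_app' v := by
    simp [weightedSumSquares_apply]; ring

end QuadraticForm

namespace CliffordAlgebra.ProdHyperbolic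

open QuadraticForm

variable {R : Type*} [CommRing R] {M : Type*} [AddCommGroup M] [Module R M] (Q : QuadraticForm R M)

def toMatrixAux : M × (R × R) →ₗ[R] Matrix (Fin 2) (Fin 2) (CliffordAlgebra Q) where
  toFun v := !![ι Q v.1, algebraMap R _ v.2.1; algebraMap R _ v.2.2, -ι Q v.1]
  map_add' v w := by
    ext i j; fin_cases i <;> fin_cases j <;> simp [add_comm]
  map_smul' c v := by
    ext i j; fin_cases i <;> fin_cases j <;> simp [Algebra.smul_def]

lemma toMatrixAux_mul_self (v : M × (R × R)) :
    toMatrixAux Q v * toMatrixAux Q v = algebraMap R _ (Q.prod (hyperbolicPlane R) v) := by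
  simp only [toMatrixAux, LinearMap.coe_mk, AddHom.coe_mk, Matrix.mul_fin_two]
  rw [Matrix.eta_fin_two (algebraMap R _ _)]
  simp only [Matrix.algebraMap_matrix_apply, prod_apply, hyperbolicPlane_apply, ι_sq_scalar,
    mul_neg, Algebra.commutes v.2.1 (ι Q v.1), Algebra.commutes v.2.2 (ι Q v.1),
    ← map_mul, ← map_add, mul_comm v.2.2]
  simp [add_comm]

def toMatrix :
    CliffordAlgebra (Q.prod (hyperbolicPlane R)) →ₐ[R] Matrix (Fin 2) (Fin 2) (CliffordAlgebra Q) :=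
  lift _ ⟨toMatrixAux Q, toMatrixAux_mul_self Q⟩

lemma toMatrix_ι (v : M × (R × R)) :
    toMatrix Q (ι _ v) = !![ι Q v.1, algebraMap R _ v.2.1; algebraMap R _ v.2.2, -ι Q v.1] :=
  lift_ι_apply _ _ _

def e : CliffordAlgebra (Q.prod (hyperbolicPlane R)) := ι _ (0, (1, 0))

def f : CliffordAlgebra (Q.prod (hyperbolicPlane R)) := ι _ (0, (0, 1))

def vol : CliffordAlgebra (Q.prod (hyperbolicPlane R)) := e Q * f Q - f Q * e Q

lemma e_mul_f_add_f_mul_e : e Q * f Q + f Q * e Q = 1 := by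
  simp [e, f, ι_mul_ι_add_swap, polar]

@[simp] lemma e_mul_e : e Q * e Q = 0 := by simp [e, ι_sq_scalar]

@[simp] lemma f_mul_f : f Q * f Q = 0 := by simp [f, ι_sq_scalar]

@[simp] lemma e_mul_f_mul_e : e Q * (f Q * e Q) = e Q := by
  rw [← sub_eq_of_eq_add' (e_mul_f_add_f_mul_e Q).symm, mul_sub, ← mul_assoc]; simp

@[simp] lemma f_mul_e_mul_f : f Q * (e Q * f Q) = f Q := by
  rw [← sub_eq_of_eq_add (e_mul_f_add_f_mul_e Q).symm, mul_sub, ← mul_assoc]; simp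

@[simp] lemma ι_inl_mul_e (m : M) : ι _ (m, 0) * e Q = -(e Q * ι _ (m, 0)) :=
  ι_mul_ι_comm_of_isOrtho (IsOrtho.inl_inr _ _)

@[simp] lemma ι_inl_mul_f (m : M) : ι _ (m, 0) * f Q = -(f Q * ι _ (m, 0)) :=
  ι_mul_ι_comm_of_isOrtho (IsOrtho.inl_inr _ _)

@[simp] lemma e_mul_e_mul (t) : e Q * (e Q * t) = 0 := by rw [← mul_assoc]; simp

@[simp] lemma f_mul_f_mul (t) : f Q * (f Q * t) = 0 := by rw [← mul_assoc]; simp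

@[simp] lemma ι_inl_mul_e_mul (m : M) (t) :
    ι _ (m, 0) * (e Q * t) = -(e Q * (ι _ (m, 0) * t)) := by
  rw [← mul_assoc]; simp [mul_assoc]

@[simp] lemma ι_inl_mul_f_mul (m : M) (t) :
    ι _ (m, 0) * (f Q * t) = -(f Q * (ι _ (m, 0) * t)) := by
  rw [← mul_assoc]; simp [mul_assoc]

lemma vol_mul_vol : vol Q * vol Q = 1 := by
  simp [vol, mul_sub, sub_mul, mul_assoc, e_mul_f_add_f_mul_e]

def diagAux : M →ₗ[R] CliffordAlgebra (Q.prod (hyperbolicPlane R)) :=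
  (LinearMap.mulRight R (vol Q)).comp ((ι _).comp (LinearMap.inl R M (R × R)))

lemma diagAux_mul_self (m : M) : diagAux Q m * diagAux Q m = algebraMap R _ (Q m) := by
  change ι _ (m, 0) * vol Q * (ι _ (m, 0) * vol Q) = _
  simp [vol, mul_sub, sub_mul, mul_assoc, ι_sq_scalar, Algebra.algebraMap_eq_smul_one, ← smul_add,
    e_mul_f_add_f_mul_e]

def diag : CliffordAlgebra Q →ₐ[R] CliffordAlgebra (Q.prod (hyperbolicPlane R)) :=
  lift Q ⟨diagAux Q, diagAux_mul_self Q⟩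

lemma diag_ι (m : M) : diag Q (ι Q m) = ι _ (m, 0) * vol Q := lift_ι_apply _ _ _

lemma commute_diag {y : CliffordAlgebra (Q.prod (hyperbolicPlane R))}
    (hy : ∀ m, Commute (ι _ (m, 0) * vol Q) y) (b : CliffordAlgebra Q) :
    Commute (diag Q b) y := by
  induction b using CliffordAlgebra.induction with
  | algebraMap r => rw [AlgHom.commutes]; exact Algebra.commute_algebraMap_left r _
  | ι m => rw [diag_ι]; exact hy m
  | mul a b ha hb => rw [map_mul]; exact ha.mul_left hb
  | add a b ha hb => rw [map_add]; exact ha.add_left hb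

lemma commute_diag_e (b : CliffordAlgebra Q) : Commute (diag Q b) (e Q) :=
  commute_diag Q (fun m => by simp [Commute, SemiconjBy, vol, mul_sub, sub_mul, mul_assoc]) b

lemma commute_diag_f (b : CliffordAlgebra Q) : Commute (diag Q b) (f Q) :=
  commute_diag Q (fun m => by simp [Commute, SemiconjBy, vol, mul_sub, sub_mul, mul_assoc]) b

def unit : Fin 2 → Fin 2 → CliffordAlgebra (Q.prod (hyperbolicPlane R)) :=
  !![e Q * f Q, e Q; f Q, f Q * e Q]

lemma unit_mul_unit (i j k l : Fin 2) :
    unit Q i j * unit Q k l = if j = k then unit Q i l else 0 := by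
  fin_cases i <;> fin_cases j <;> fin_cases k <;> fin_cases l <;> simp [unit, mul_assoc]

lemma sum_unit_self : ∑ i, unit Q i i = 1 := by
  simp [unit, e_mul_f_add_f_mul_e]

lemma commute_diag_unit (b : CliffordAlgebra Q) (i j : Fin 2) :
    Commute (diag Q b) (unit Q i j) := by
  have he := commute_diag_e Q b
  have hf := commute_diag_f Q b
  fin_cases i <;> fin_cases j
  · exact he.mul_right hf
  · exact he
  · exact hf
  · exact hf.mul_right he

def ofMatrix :
    Matrix (Fin 2) (Fin 2) (CliffordAlgebra Q) →ₐ[R] CliffordAlgebra (Q.prod (hyperbolicPlane R)) :=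
  Matrix.liftOfMatrixUnits (diag Q) (unit Q) (unit_mul_unit Q) (sum_unit_self Q)
    (commute_diag_unit Q)

lemma toMatrix_e : toMatrix Q (e Q) = Matrix.single 0 1 1 := by
  rw [e, toMatrix_ι]
  ext i j; fin_cases i <;> fin_cases j <;> simp

lemma toMatrix_f : toMatrix Q (f Q) = Matrix.single 1 0 1 := by
  rw [f, toMatrix_ι]
  ext i j; fin_cases i <;> fin_cases j <;> simp

lemma toMatrix_unit (i j : Fin 2) : toMatrix Q (unit Q i j) = Matrix.single i j 1 := by
  fin_cases i <;> fin_cases j <;>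
    simp [unit, toMatrix_e, toMatrix_f, Matrix.single_mul_single_same]

lemma toMatrix_vol : toMatrix Q (vol Q) = !![1, 0; 0, -1] := by
  simp only [vol, map_sub, map_mul, toMatrix_e, toMatrix_f, Matrix.single_mul_single_same]
  ext i j; fin_cases i <;> fin_cases j <;> simp

lemma toMatrix_comp_diag : (toMatrix Q).comp (diag Q) = Matrix.scalarAlgHom (Fin 2) R := by
  refine hom_ext (LinearMap.ext fun m => ?_)
  simp only [LinearMap.comp_apply, AlgHom.toLinearMap_apply, AlgHom.comp_apply, diag_ι, map_mul,
    toMatrix_vol, toMatrix_ι, Matrix.mul_fin_two]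
  ext i j; fin_cases i <;> fin_cases j <;> simp

lemma toMatrix_ofMatrix (A : Matrix (Fin 2) (Fin 2) (CliffordAlgebra Q)) :
    toMatrix Q (ofMatrix Q A) = A := by
  have hdiag (b) : toMatrix Q (diag Q b) = Matrix.scalar (Fin 2) b :=
    AlgHom.congr_fun (toMatrix_comp_diag Q) b
  have hsingle (i j : Fin 2) (b : CliffordAlgebra Q) :
      Matrix.scalar (Fin 2) b * Matrix.single i j 1 = Matrix.single i j b := by
    ext k l; simp [Matrix.single_apply]
  simp only [ofMatrix, Matrix.liftOfMatrixUnits_apply, map_sum, map_mul, hdiag, toMatrix_unit,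
    hsingle]
  exact (Matrix.matrix_eq_sum_single A).symm

lemma ofMatrix_comp_toMatrix : (ofMatrix Q).comp (toMatrix Q) = AlgHom.id R _ := by
  refine hom_ext (LinearMap.ext fun ⟨m, s, t⟩ => ?_)
  have hv : ι (Q.prod (hyperbolicPlane R)) (m, s, t) = ι _ (m, 0) + s • e Q + t • f Q := by
    rw [e, f, ← map_smul, ← map_smul, ← map_add, ← map_add]; congr 1; ext <;> simp
  simp only [LinearMap.comp_apply, AlgHom.toLinearMap_apply, AlgHom.comp_apply, toMatrix_ι,
    AlgHom.id_apply, ofMatrix, Matrix.liftOfMatrixUnits_apply, Fin.sum_univ_two]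
  simp only [unit, Matrix.of_apply, Matrix.cons_val', Matrix.cons_val_zero, Matrix.cons_val_one,
    Matrix.cons_val_fin_one, diag_ι, AlgHom.commutes, map_neg, neg_mul]
  calc _ = ι _ (m, 0) * vol Q * (e Q * f Q - f Q * e Q) + s • e Q + t • f Q := by
        rw [mul_sub, Algebra.smul_def, Algebra.smul_def]; abel
    _ = _ := by
      change ι _ (m, 0) * vol Q * vol Q + s • e Q + t • f Q = _
      rw [mul_assoc, vol_mul_vol, mul_one, hv]

def equivMatrix :
    CliffordAlgebra (Q.prod (hyperbolicPlane R)) ≃ₐ[R] Matrix (Fin 2) (Fin 2) (CliffordAlgebra Q) :=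
  AlgEquiv.ofAlgHom (toMatrix Q) (ofMatrix Q) (AlgHom.ext (toMatrix_ofMatrix Q))
    (ofMatrix_comp_toMatrix Q)

end CliffordAlgebra.ProdHyperbolic

/-- `Fin 2` goes to the last of the first `a + 1` indices and to the very last index. -/
def finAddSumFinTwoEquiv (a b : ℕ) : Fin (a + b) ⊕ Fin 2 ≃ Fin (a + 1 + (b + 1)) :=
  ((finSumFinEquiv.symm.sumCongr (finSumFinEquiv (m := 1) (n := 1)).symm).trans
    (Equiv.sumSumSumComm _ _ _ _)).trans
    ((finSumFinEquiv.sumCongr finSumFinEquiv).trans finSumFinEquiv)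

namespace Qpq

lemma weight_comp_finAddSumFinTwoEquiv (a b : ℕ) :
    (fun i : Fin (a + 1 + (b + 1)) => if (i : ℕ) < a + 1 then (-1 : ℝ) else 1) ∘
        finAddSumFinTwoEquiv a b
      = Sum.elim (fun i : Fin (a + b) => if (i : ℕ) < a then (-1 : ℝ) else 1) ![-1, 1] := by
  ext x
  rcases x with i | i
  · obtain ⟨j, rfl⟩ := finSumFinEquiv.surjective i
    rcases j with j | j
    · simp [finAddSumFinTwoEquiv]
    · simp [finAddSumFinTwoEquiv, add_assoc]
  · have h0 : (finSumFinEquiv (m := 1) (n := 1)).symm 0 = Sum.inl 0 := rfl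
    have h1 : (finSumFinEquiv (m := 1) (n := 1)).symm 1 = Sum.inr 0 := rfl
    fin_cases i
    · simp [finAddSumFinTwoEquiv, h0]
    · simp [finAddSumFinTwoEquiv, h1, add_assoc]

open QuadraticForm in
noncomputable def isometryEquivProdHyperbolic (a b : ℕ) :
    (Qpq (a + 1) (b + 1)).IsometryEquiv ((Qpq a b).prod (hyperbolicPlane ℝ)) :=
  (weightedSumSquaresCompEquiv _ (finAddSumFinTwoEquiv a b)).symm.trans <|
    (weightedSumSquaresCongr (weight_comp_finAddSumFinTwoEquiv a b)).trans <|
      (weightedSumSquaresSumElimEquivProd _ _).trans <|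
        IsometryEquiv.prod (QuadraticMap.IsometryEquiv.refl (Qpq a b))
          weightedSumSquaresNegOneOneEquivHyperbolic

end Qpq

/-- `C^{p+n,q+n} ≅ M_{2^n}(C^{p,q})`. -/
theorem clifford_pnqn_equiv_matrix (p q n : ℕ) :
    Nonempty (CliffordAlgebra (Qpq (p + n) (q + n)) ≃ₐ[ℝ]
      Matrix (Fin (2 ^ n)) (Fin (2 ^ n)) (CliffordAlgebra (Qpq p q))) := by
  induction n with
  | zero =>
    rw [pow_zero]
    exact ⟨.ofBijective (Matrix.scalarAlgHom (Fin 1) ℝ) ⟨fun _ _ => Matrix.scalar_inj.mp,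
      fun M => ⟨M 0 0, by ext i j; simp [Fin.fin_one_eq_zero]⟩⟩⟩
  | succ n ih =>
    obtain ⟨e⟩ := ih
    exact ⟨(equivOfIsometry (Qpq.isometryEquivProdHyperbolic (p + n) (q + n))).trans <|
      (ProdHyperbolic.equivMatrix _).trans <| e.mapMatrix.trans (Matrix.finTwoPowSuccAlgEquiv ℝ n)⟩
end

section
/- Periodicity two of complex Clifford algebras, even case: for every natural number p, the complex Clifford algebra CliffordAlgebra Q^{2p}_ℂ of the sum-of-squares form on Fin (2p) → ℂ is isomorphic as a ℂ-algebra to the algebra of 2^p × 2^p complex matrices. -/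
/-- The complex quadratic form `Q^n_ℂ` on `Fin n → ℂ`, given by `z ↦ z₀² + ⋯ + z_{n-1}²`. -/
noncomputable def Qc (n : ℕ) : QuadraticForm ℂ (Fin n → ℂ) :=
  QuadraticMap.weightedSumSquares ℂ (fun _ : Fin n => (1 : ℂ))

/-!
Suppose `ω ∈ Cl(Q₂)` is even, `ω² = 1`, and `ω` anticommutes with the vectors of `Q₂`, so that
conjugation by `ω` is the grading automorphism. Then `(m, v) ↦ ι m ⊗ ω + 1 ⊗ ι v` identifies
`Cl(Q₁ ⊕ Q₂)` with the ordinary (ungraded) tensor product `Cl(Q₁) ⊗ Cl(Q₂)`: the twist by `ω`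
makes the two factors commute instead of anticommute. For `Q₂ = x² + y²` over a ring containing
`½` and a square root `i` of `-1`, the element `ω = i e₁e₂` works, and `Cl(Q₂)` is the split
quaternion algebra `ℍ[1, 1] ≅ M₂`. Hence `Cl(Q^{2p+2}_ℂ) ≅ Cl(Q^{2p}_ℂ) ⊗ M₂(ℂ)`, and the
theorem follows by induction from `M_a ⊗ M_b ≅ M_{ab}`.
-/

open CliffordAlgebra QuadraticMap TensorProduct Quaternion

namespace CliffordAlgebra

variable {R M₁ M₂ : Type*} [CommRing R] [AddCommGroup M₁] [AddCommGroup M₂]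
  [Module R M₁] [Module R M₂] {Q₁ : QuadraticForm R M₁} {Q₂ : QuadraticForm R M₂}

theorem ι_inl_mul_map_inr (m : M₁) (x : CliffordAlgebra Q₂) :
    ι (Q₁.prod Q₂) (m, 0) * map (.inr Q₁ Q₂) x =
      map (.inr Q₁ Q₂) (involute x) * ι (Q₁.prod Q₂) (m, 0) := by
  induction x using CliffordAlgebra.induction with
  | algebraMap r => simp only [AlgHom.commutes, Algebra.commutes]
  | ι v =>
    have h := ι_mul_ι_add_swap (Q := Q₁.prod Q₂) (m, 0) (0, v)
    simp only [polar_prod, polar_zero_right, polar_zero_left, add_zero, map_zero] at h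
    rw [involute_ι, map_neg, map_apply_ι, neg_mul, eq_neg_iff_add_eq_zero]
    exact h
  | mul x y hx hy =>
    rw [map_mul, map_mul, map_mul, ← mul_assoc, hx, mul_assoc, hy, mul_assoc]
  | add x y hx hy => rw [map_add, map_add, map_add, mul_add, add_mul, hx, hy]

variable {ω : CliffordAlgebra Q₂}

theorem mul_eq_involute_mul (hω_anti : ∀ v, ι Q₂ v * ω = -(ω * ι Q₂ v))
    (x : CliffordAlgebra Q₂) : ω * x = involute x * ω := by
  induction x using CliffordAlgebra.induction with
  | algebraMap r => simp only [AlgHom.commutes, Algebra.commutes]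
  | ι v => rw [involute_ι, neg_mul, hω_anti, neg_neg]
  | mul x y hx hy => rw [map_mul, ← mul_assoc, hx, mul_assoc, hy, mul_assoc]
  | add x y hx hy => rw [map_add, mul_add, add_mul, hx, hy]

theorem commute_ι_inl_mul_map_inr (hω_anti : ∀ v, ι Q₂ v * ω = -(ω * ι Q₂ v)) (m : M₁)
    (y : CliffordAlgebra Q₂) :
    Commute (ι (Q₁.prod Q₂) (m, 0) * map (.inr Q₁ Q₂) ω) (map (.inr Q₁ Q₂) y) :=
  calc ι _ (m, 0) * map _ ω * map _ y
      = ι _ (m, 0) * map (.inr Q₁ Q₂) (involute y) * map _ ω := by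
        rw [mul_assoc, ← map_mul, mul_eq_involute_mul hω_anti, map_mul, mul_assoc]
    _ = map _ y * (ι _ (m, 0) * map _ ω) := by
        rw [ι_inl_mul_map_inr, involute_involute, mul_assoc]

variable (Q₁) (hω_even : involute ω = ω) (hω_sq : ω * ω = 1)
  (hω_anti : ∀ v, ι Q₂ v * ω = -(ω * ι Q₂ v))

def prodToTensor :
    CliffordAlgebra (Q₁.prod Q₂) →ₐ[R] CliffordAlgebra Q₁ ⊗[R] CliffordAlgebra Q₂ :=
  lift _ ⟨((TensorProduct.mk R _ _).flip ω ∘ₗ ι Q₁).coprod (TensorProduct.mk R _ _ 1 ∘ₗ ι Q₂),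
    fun ⟨m, v⟩ => by
      simp only [LinearMap.coprod_apply, LinearMap.comp_apply, LinearMap.flip_apply,
        TensorProduct.mk_apply, add_mul, mul_add, Algebra.TensorProduct.tmul_mul_tmul,
        ι_sq_scalar, hω_sq, hω_anti, one_mul, mul_one, prod_apply, map_add, tmul_neg,
        Algebra.TensorProduct.algebraMap_apply]
      rw [Algebra.algebraMap_eq_smul_one (A := CliffordAlgebra Q₂),
        Algebra.algebraMap_eq_smul_one (A := CliffordAlgebra Q₁) (Q₂ v), smul_tmul]
      abel⟩

theorem prodToTensor_ι (x : M₁ × M₂) :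
    prodToTensor Q₁ hω_sq hω_anti (ι _ x) = ι Q₁ x.1 ⊗ₜ ω + 1 ⊗ₜ ι Q₂ x.2 :=
  lift_ι_apply _ _ _

theorem prodToTensor_map_inr (y : CliffordAlgebra Q₂) :
    prodToTensor Q₁ hω_sq hω_anti (map (.inr Q₁ Q₂) y) = 1 ⊗ₜ y := by
  change ((prodToTensor Q₁ hω_sq hω_anti).comp (map (.inr Q₁ Q₂))) y =
    Algebra.TensorProduct.includeRight y
  congr 1
  ext v
  simp [prodToTensor_ι]

def tensorToProd :
    CliffordAlgebra Q₁ ⊗[R] CliffordAlgebra Q₂ →ₐ[R] CliffordAlgebra (Q₁.prod Q₂) :=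
  Algebra.TensorProduct.lift
    (lift Q₁ ⟨LinearMap.mulRight R (map (.inr Q₁ Q₂) ω) ∘ₗ ι _ ∘ₗ LinearMap.inl R M₁ M₂,
      fun m => by
        have hcomm : Commute (ι (Q₁.prod Q₂) (m, 0)) (map (.inr Q₁ Q₂) ω) := by
          rw [Commute, SemiconjBy, ι_inl_mul_map_inr, hω_even]
        simp only [LinearMap.comp_apply, LinearMap.inl_apply, LinearMap.mulRight_apply]
        rw [hcomm.symm.mul_mul_mul_comm, ← map_mul (map _), hω_sq, map_one, mul_one,
          ι_sq_scalar, prod_apply, map_zero, add_zero]⟩)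
    (map (.inr Q₁ Q₂))
    (fun x y => by
      induction x using CliffordAlgebra.induction with
      | algebraMap r => rw [AlgHom.commutes]; exact Algebra.commute_algebraMap_left r _
      | ι m => rw [lift_ι_apply]; exact commute_ι_inl_mul_map_inr hω_anti m y
      | mul x₁ x₂ h₁ h₂ => rw [map_mul]; exact h₁.mul_left h₂
      | add x₁ x₂ h₁ h₂ => rw [map_add]; exact h₁.add_left h₂)

theorem tensorToProd_ι_tmul_one (m : M₁) :
    tensorToProd Q₁ hω_even hω_sq hω_anti (ι Q₁ m ⊗ₜ 1) =
      ι (Q₁.prod Q₂) (m, 0) * map (.inr Q₁ Q₂) ω := by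
  simp [tensorToProd]

theorem tensorToProd_one_tmul (y : CliffordAlgebra Q₂) :
    tensorToProd Q₁ hω_even hω_sq hω_anti (1 ⊗ₜ y) = map (.inr Q₁ Q₂) y := by
  simp [tensorToProd]

theorem tensorToProd_ι_tmul (m : M₁) :
    tensorToProd Q₁ hω_even hω_sq hω_anti (ι Q₁ m ⊗ₜ ω) = ι (Q₁.prod Q₂) (m, 0) :=
  calc _ = tensorToProd Q₁ hω_even hω_sq hω_anti ((ι Q₁ m ⊗ₜ 1) * (1 ⊗ₜ ω)) := by
        rw [Algebra.TensorProduct.tmul_mul_tmul, mul_one, one_mul]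
    _ = _ := by
        rw [map_mul, tensorToProd_ι_tmul_one, tensorToProd_one_tmul, mul_assoc,
          ← map_mul (map _), hω_sq, map_one, mul_one]

def prodEquivTensor :
    CliffordAlgebra (Q₁.prod Q₂) ≃ₐ[R] CliffordAlgebra Q₁ ⊗[R] CliffordAlgebra Q₂ :=
  AlgEquiv.ofAlgHom (prodToTensor Q₁ hω_sq hω_anti) (tensorToProd Q₁ hω_even hω_sq hω_anti)
    (by
      ext
      · simp [tensorToProd_ι_tmul_one, prodToTensor_ι, prodToTensor_map_inr, hω_sq]
      · simp [tensorToProd_one_tmul, prodToTensor_ι])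
    (by
      ext
      · simp [prodToTensor_ι, tensorToProd_ι_tmul]
      · simp [prodToTensor_ι, tensorToProd_one_tmul])

end CliffordAlgebra

namespace QuaternionAlgebra

variable (R : Type*) [CommRing R]

def matrixBasis : Basis (Matrix (Fin 2) (Fin 2) R) (1 : R) 0 1 where
  i := !![1, 0; 0, -1]
  j := !![0, 1; 1, 0]
  k := !![0, 1; -1, 0]
  i_mul_i := by simp [Matrix.one_fin_two]
  j_mul_j := by simp [Matrix.one_fin_two]
  i_mul_j := by simp
  j_mul_i := by simp

theorem matrixBasis_liftHom_apply (x : ℍ[R, 1, 1]) :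
    (matrixBasis R).liftHom x = !![x.re + x.imI, x.imJ + x.imK; x.imJ - x.imK, x.re - x.imI] := by
  ext i j
  fin_cases i <;> fin_cases j <;>
    simp [Basis.liftHom, Basis.lift, matrixBasis, Algebra.algebraMap_eq_smul_one] <;> ring

noncomputable def equivMatrix [Invertible (2 : R)] : ℍ[R, 1, 1] ≃ₐ[R] Matrix (Fin 2) (Fin 2) R :=
  AlgEquiv.ofBijective (matrixBasis R).liftHom <| Function.bijective_iff_has_inverse.mpr
    ⟨fun M => ⟨⅟2 * (M 0 0 + M 1 1), ⅟2 * (M 0 0 - M 1 1), ⅟2 * (M 0 1 + M 1 0),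
      ⅟2 * (M 0 1 - M 1 0)⟩,
    fun x => by
      rw [matrixBasis_liftHom_apply]
      ext <;> simp <;> ring_nf <;> rw [mul_right_comm, invOf_mul_self, one_mul],
    fun M => by
      rw [matrixBasis_liftHom_apply]
      ext i j
      fin_cases i <;> fin_cases j <;> simp <;> ring_nf <;>
        rw [mul_right_comm, invOf_mul_self, one_mul]⟩

end QuaternionAlgebra

namespace CliffordAlgebraQuaternion

variable {R : Type*} [CommRing R] (c₁ c₂ : R)

theorem ι_eq_smul_i_add_smul_j (v : R × R) :
    ι (Q c₁ c₂) v = v.1 • (quaternionBasis c₁ c₂).i + v.2 • (quaternionBasis c₁ c₂).j := by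
  rw [i_quaternionBasis, j_quaternionBasis, ← map_smul, ← map_smul, ← map_add]
  simp

theorem involute_quaternionBasis_k :
    involute (quaternionBasis c₁ c₂).k = (quaternionBasis c₁ c₂).k := by
  rw [k_quaternionBasis, map_mul, involute_ι, involute_ι, neg_mul_neg]

theorem ι_mul_quaternionBasis_k (v : R × R) :
    ι (Q c₁ c₂) v * (quaternionBasis c₁ c₂).k = -((quaternionBasis c₁ c₂).k * ι (Q c₁ c₂) v) := by
  set q := quaternionBasis c₁ c₂
  rw [ι_eq_smul_i_add_smul_j, add_mul, mul_add, smul_mul_assoc, smul_mul_assoc, mul_smul_comm,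
    mul_smul_comm, q.i_mul_k, q.k_mul_i, q.j_mul_k, q.k_mul_j]
  module

end CliffordAlgebraQuaternion

namespace CliffordAlgebra

open CliffordAlgebraQuaternion

variable {R M : Type*} [CommRing R] [Invertible (2 : R)] [AddCommGroup M] [Module R M]

noncomputable def prodEquivTensorMatrix (Q₁ : QuadraticForm R M) {i : R} (hi : i * i = -1) :
    CliffordAlgebra (Q₁.prod (Q (1 : R) 1)) ≃ₐ[R]
      CliffordAlgebra Q₁ ⊗[R] Matrix (Fin 2) (Fin 2) R :=
  (prodEquivTensor Q₁ (ω := i • (quaternionBasis (1 : R) 1).k)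
    (by rw [map_smul, involute_quaternionBasis_k])
    (by rw [smul_mul_smul_comm, hi, QuaternionAlgebra.Basis.k_mul_k]; simp)
    (fun v => by rw [mul_smul_comm, smul_mul_assoc, ι_mul_quaternionBasis_k, smul_neg])).trans
  (Algebra.TensorProduct.congr AlgEquiv.refl
    (CliffordAlgebraQuaternion.equiv.trans (QuaternionAlgebra.equivMatrix R)))

end CliffordAlgebra

theorem Qc_apply (n : ℕ) (v : Fin n → ℂ) : Qc n v = ∑ i, v i * v i := by
  simp [Qc, weightedSumSquares_apply]

namespace Qc

noncomputable def addIsometryEquivProd (n m : ℕ) :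
    (Qc (n + m)).IsometryEquiv ((Qc n).prod (Qc m)) where
  toLinearEquiv := (LinearEquiv.funCongrLeft ℂ ℂ finSumFinEquiv).trans
      (LinearEquiv.sumArrowLequivProdArrow _ _ ℂ ℂ)
  map_app' v := by
    simp only [prod_apply, Qc_apply]
    rw [← Equiv.sum_comp finSumFinEquiv (fun i => v i * v i), Fintype.sum_sum_type]
    rfl

noncomputable def twoIsometryEquiv : (Qc 2).IsometryEquiv (CliffordAlgebraQuaternion.Q 1 1) where
  toLinearEquiv := LinearEquiv.piFinTwo ℂ (fun _ => ℂ)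
  map_app' v := by simp [Qc_apply]

noncomputable def zeroIsometryEquiv : (Qc 0).IsometryEquiv (0 : QuadraticForm ℂ Unit) where
  toLinearEquiv := LinearEquiv.ofSubsingleton _ _
  map_app' v := by simp [Qc_apply]

end Qc

/-- Periodicity two of complex Clifford algebras, even case:
`C̄^{2p} ≅ M_{2^p}(ℂ)` as `ℂ`-algebras. -/
theorem complex_clifford_even (p : ℕ) :
    Nonempty (CliffordAlgebra (Qc (2 * p)) ≃ₐ[ℂ]
      Matrix (Fin (2 ^ p)) (Fin (2 ^ p)) ℂ) := by
  induction p with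
  | zero =>
    -- `Fin 1` has its own `Fintype` and `DecidableEq` instances, not the ones built from `Unique`.
    have e₁ : Matrix (Fin 1) (Fin 1) ℂ ≃ₐ[ℂ] ℂ := by convert Matrix.uniqueAlgEquiv (m := Fin 1)
    exact ⟨(equivOfIsometry Qc.zeroIsometryEquiv).trans (CliffordAlgebraRing.equiv.trans e₁.symm)⟩
  | succ p ih =>
    obtain ⟨e⟩ := ih
    exact ⟨(equivOfIsometry <|
        (Qc.addIsometryEquivProd (2 * p) 2).trans (.prod (.refl _) Qc.twoIsometryEquiv)).trans <|
      (prodEquivTensorMatrix _ Complex.I_mul_I).trans <|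
      (Algebra.TensorProduct.congr e AlgEquiv.refl).trans <|
      (Matrix.kroneckerAlgEquiv _ _ ℂ).trans (Matrix.reindexAlgEquiv ℂ ℂ finProdFinEquiv)⟩
end

section
/- Twisted conjugation by a vector is a reflection: let R be a commutative ring, M an R-module, Q a quadratic form on M, and v ∈ M such that Q v is invertible in R. Then ι v is invertible in CliffordAlgebra Q with inverse (Q v)⁻¹ • ι v, and for every w ∈ M one has involute (ι v) · ι w · (ι v)⁻¹ = ι ( w − (Q v)⁻¹ * polar Q v w • v ), where polar Q v w = Q(v + w) − Q v − Q w. In particular the twisted adjoint action of ι v maps ι(M) into ι(M), so ι v belongs to the twisted Clifford group of Q. -/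
open CliffordAlgebra

/-- Twisted conjugation by a vector is a reflection: if `Q v` is invertible, then `ι v` is
invertible with inverse `(Q v)⁻¹ • ι v`, and for every `w`,
`involute (ι v) * ι w * (ι v)⁻¹ = ι (w - ((Q v)⁻¹ * polar Q v w) • v)`;
in particular the twisted adjoint action of `ι v` maps `ι(M)` into itself. -/
theorem twisted_conjugation_ι_reflection
    {R : Type*} [CommRing R] {M : Type*} [AddCommGroup M] [Module R M]
    (Q : QuadraticForm R M) (v : M) (hv : Invertible (Q v)) :
    ∃ hinv : Invertible (ι Q v),
      hinv.invOf = hv.invOf • ι Q v ∧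
      ∀ w : M,
        involute (ι Q v) * ι Q w * hinv.invOf =
          ι Q (w - (hv.invOf * QuadraticMap.polar Q v w) • v) := by
  letI := hv
  letI hinv := invertibleιOfInvertible Q v
  refine ⟨hinv, ?_, fun w => ?_⟩
  · show ι Q (⅟ (Q v) • v) = _
    rw [map_smul]
  · have h := ι_mul_ι_mul_invOf_ι Q v w
    rw [involute_ι, neg_mul, neg_mul]
    show -(ι Q v * ι Q w * ⅟ (ι Q v)) = _
    rw [h, ← map_neg, neg_sub]
end
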